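/- arXiv:2211.13720 — 3 statements merged into one kernel-verified Lean document; each statement's English description precedes it below -/
import Mathlib

section
/- Consider the relative kinematics ṙ = Vr, V̇r = Vθ²/r − κ, V̇θ = −Vr·Vθ/r (attractive potential field dynamics toward a stationary goal) on the region r > 0. For the function V_L = κr + ½Vθ² + ½(Vr+V)², its derivative along trajectories satisfying Vr²+Vθ² = V² equals −V(κ − Vθ²/r). Hence if κ > V²/r* then V̇_L < 0 for all r > r* with Vθ ≠ 0. -/
theorem lyapunov_derivative_eq (κ V r Vr Vθ : ℝ) :
    κ * Vr + Vθ * (-Vr * Vθ / r) + (Vr + V) * (Vθ ^ 2 / r - κ) = -V * (κ - Vθ ^ 2 / r) := by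
  ring

theorem sq_div_lt_of_sq_add_sq_eq {κ V rstar r Vr Vθ : ℝ} (hrstar : 0 < rstar) (hr : rstar < r)
    (hinv : Vr ^ 2 + Vθ ^ 2 = V ^ 2) (hκ : V ^ 2 / rstar < κ) : Vθ ^ 2 / r < κ := by
  have hVθ : Vθ ^ 2 ≤ V ^ 2 := by nlinarith [sq_nonneg Vr]
  have hr0 : 0 < r := hrstar.trans hr
  calc Vθ ^ 2 / r ≤ V ^ 2 / r := by gcongr
    _ ≤ V ^ 2 / rstar := by gcongr
    _ < κ := hκ

theorem attractive_lyapunov_derivative_general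
    (κ V rstar : ℝ) (hV : 0 < V) (hrstar : 0 < rstar) :
    (∀ r Vr Vθ : ℝ, 0 < r → Vr ^ 2 + Vθ ^ 2 = V ^ 2 →
      κ * Vr + Vθ * (-Vr * Vθ / r) + (Vr + V) * (Vθ ^ 2 / r - κ) =
        -V * (κ - Vθ ^ 2 / r)) ∧
    (κ > V ^ 2 / rstar →
      ∀ r Vr Vθ : ℝ, rstar < r → Vr ^ 2 + Vθ ^ 2 = V ^ 2 → Vθ ≠ 0 →
        κ * Vr + Vθ * (-Vr * Vθ / r) + (Vr + V) * (Vθ ^ 2 / r - κ) < 0) := by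
  refine ⟨fun r Vr Vθ _ _ => lyapunov_derivative_eq κ V r Vr Vθ, ?_⟩
  intro hκ r Vr Vθ hr hinv _
  rw [lyapunov_derivative_eq]
  exact mul_neg_of_neg_of_pos (neg_neg_of_pos hV)
    (sub_pos.2 (sq_div_lt_of_sq_add_sq_eq hrstar hr hinv hκ))

/-- For the attractive-field engagement dynamics ṙ = Vr, V̇r = Vθ²/r − κ,
V̇θ = −VrVθ/r on r > 0, the derivative of V_L = κr + ½Vθ² + ½(Vr+V)² along trajectories
(with invariant Vr² + Vθ² = V²) equals −V(κ − Vθ²/r); hence if κ > V²/r* then this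
derivative is negative for all r > r* with Vθ ≠ 0. -/
theorem attractive_lyapunov_derivative
    (κ V rstar : ℝ) (hκ : 0 < κ) (hV : 0 < V) (hrstar : 0 < rstar) :
    (∀ r Vr Vθ : ℝ, 0 < r → Vr ^ 2 + Vθ ^ 2 = V ^ 2 →
      κ * Vr + Vθ * (-Vr * Vθ / r) + (Vr + V) * (Vθ ^ 2 / r - κ) =
        -V * (κ - Vθ ^ 2 / r)) ∧
    (κ > V ^ 2 / rstar →
      ∀ r Vr Vθ : ℝ, rstar < r → Vr ^ 2 + Vθ ^ 2 = V ^ 2 → Vθ ≠ 0 →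
        κ * Vr + Vθ * (-Vr * Vθ / r) + (Vr + V) * (Vθ ^ 2 / r - κ) < 0) :=
  attractive_lyapunov_derivative_general κ V rstar hV hrstar
end

section
/- For the attacking-robot engagement dynamics ṙ = Vr, V̇r = Vθ²/r + 2λ Vr Vθ/(V_rel r²) − κ, V̇θ = −Vr Vθ/r + λ Vr²/(V_rel r²), the derivative of V_L = κr + ½Vθ² + ½Vr² along trajectories equals 3λ Vr² Vθ/(V_rel r²). -/
theorem attacking_lyapunov_derivative_general
    (κ lam r Vr Vθ Vrel : ℝ) :
    κ * Vr + Vθ * (-Vr * Vθ / r + lam * Vr ^ 2 / (Vrel * r ^ 2)) +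
        Vr * (Vθ ^ 2 / r + 2 * lam * Vr * Vθ / (Vrel * r ^ 2) - κ) =
      3 * lam * Vr ^ 2 * Vθ / (Vrel * r ^ 2) := by
  -- The terms ±κ Vr and ∓Vr Vθ² / r cancel, and the two λ-terms add up to 3λ Vr² Vθ / (V_rel r²).
  ring

/-- For the attacking-robot engagement dynamics ṙ = Vr,
V̇r = Vθ²/r + 2λVrVθ/(V_rel r²) − κ, V̇θ = −VrVθ/r + λVr²/(V_rel r²),
the derivative of V_L = κr + ½Vθ² + ½Vr² along trajectories equals
3λVr²Vθ/(V_rel r²). -/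
theorem attacking_lyapunov_derivative
    (κ lam r Vr Vθ Vrel : ℝ) (hκ : 0 < κ) (hlam : 0 < lam) (hr : 0 < r)
    (hVrel : Vrel = Real.sqrt (Vr ^ 2 + Vθ ^ 2)) (hVrelpos : 0 < Vrel) :
    κ * Vr + Vθ * (-Vr * Vθ / r + lam * Vr ^ 2 / (Vrel * r ^ 2)) +
        Vr * (Vθ ^ 2 / r + 2 * lam * Vr * Vθ / (Vrel * r ^ 2) - κ) =
      3 * lam * Vr ^ 2 * Vθ / (Vrel * r ^ 2) :=
  attacking_lyapunov_derivative_general κ lam r Vr Vθ Vrel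
end

section
/- Let d = √(R_turn² + l²) − R_turn with R_turn = V²/F_lim and l > R_Rob > 0, V > 0. Then d ≥ R_Rob if and only if R_turn ≤ (l² − R_Rob²)/(2R_Rob), equivalently F_lim ≥ 2R_Rob V²/(l² − R_Rob²). -/
/-!
Squaring `R_rob + R_turn ≤ √(R_turn² + l²)` cancels `R_turn²` and leaves the linear condition
`2 R_rob R_turn ≤ l² − R_rob²`; with `R_turn = V²/F_lim` this rearranges to the bound on `F_lim`.
-/

theorem Real.add_le_sqrt_sq_add_sq_iff {r R l : ℝ} (hr : 0 < r) :
    r + R ≤ √(R ^ 2 + l ^ 2) ↔ r * (r + 2 * R) ≤ l ^ 2 := by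
  by_cases hrR : 0 ≤ r + R
  · rw [Real.le_sqrt hrR (by positivity)]
    constructor <;> intro h <;> nlinarith
  · have hlhs : r + R ≤ √(R ^ 2 + l ^ 2) := by linarith [Real.sqrt_nonneg (R ^ 2 + l ^ 2)]
    have hrhs : r * (r + 2 * R) ≤ l ^ 2 := by nlinarith [sq_nonneg l]
    exact iff_of_true hlhs hrhs

theorem Real.le_sqrt_sq_add_sq_sub_iff {r R l : ℝ} (hr : 0 < r) :
    r ≤ √(R ^ 2 + l ^ 2) - R ↔ R ≤ (l ^ 2 - r ^ 2) / (2 * r) := by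
  rw [le_sub_iff_add_le, Real.add_le_sqrt_sq_add_sq_iff hr, le_div_iff₀ (by positivity)]
  constructor <;> intro h <;> linarith

theorem div_le_div_iff_mul_div_le {a b c x : ℝ} (hx : 0 < x) (hb : 0 < b) (hc : 0 < c) :
    a / x ≤ b / c ↔ c * a / b ≤ x := by
  rw [div_le_comm₀ hx (div_pos hb hc), div_div_eq_mul_div, mul_comm]

theorem grazing_avoidance_condition_general
    (V Flim RRob l Rturn d : ℝ)
    (hF : 0 < Flim) (hRRob : 0 < RRob) (hl : RRob < l)
    (hRturn : Rturn = V ^ 2 / Flim)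
    (hd : d = Real.sqrt (Rturn ^ 2 + l ^ 2) - Rturn) :
    (d ≥ RRob ↔ Rturn ≤ (l ^ 2 - RRob ^ 2) / (2 * RRob)) ∧
      (Rturn ≤ (l ^ 2 - RRob ^ 2) / (2 * RRob) ↔
        Flim ≥ 2 * RRob * V ^ 2 / (l ^ 2 - RRob ^ 2)) := by
  have hgap : 0 < l ^ 2 - RRob ^ 2 := by nlinarith
  subst hRturn hd
  exact ⟨Real.le_sqrt_sq_add_sq_sub_iff hRRob,
    div_le_div_iff_mul_div_le hF hgap (by positivity)⟩

/-- With R_turn = V²/F_lim, l > R_Rob > 0, d = √(R_turn²+l²) − R_turn: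
d ≥ R_Rob ↔ R_turn ≤ (l² − R_Rob²)/(2R_Rob) ↔ F_lim ≥ 2R_Rob V²/(l² − R_Rob²). -/
theorem grazing_avoidance_condition
    (V Flim RRob l Rturn d : ℝ)
    (hV : 0 < V) (hF : 0 < Flim) (hRRob : 0 < RRob) (hl : RRob < l)
    (hRturn : Rturn = V ^ 2 / Flim)
    (hd : d = Real.sqrt (Rturn ^ 2 + l ^ 2) - Rturn) :
    (d ≥ RRob ↔ Rturn ≤ (l ^ 2 - RRob ^ 2) / (2 * RRob)) ∧
      (Rturn ≤ (l ^ 2 - RRob ^ 2) / (2 * RRob) ↔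
        Flim ≥ 2 * RRob * V ^ 2 / (l ^ 2 - RRob ^ 2)) :=
  grazing_avoidance_condition_general V Flim RRob l Rturn d hF hRRob hl hRturn hd
end
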